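/- arXiv:1804.05658 — 3 statements merged into one kernel-verified Lean document; each statement's English description precedes it below -/
import Mathlib

section
/- Let F, G : D → ℝ³ be C^{2,α} immersions of the closed unit disk (0 < α < 1), and let φ be a C¹ diffeomorphism of D fixing ∂D pointwise such that F = G ∘ φ. Then φ is a C^{2,α} diffeomorphism. -/
/-!
Differentiating `F = G ∘ φ` gives `F' = G'(φ) ∘ φ'`. Since `G'` is injective, this can be solved
as `φ' = P(G'(φ)) ∘ F'`, where `P(A) = (A†A)⁻¹A†` is a left inverse depending smoothly on the
injective map `A`. The right-hand side is `C¹`, so `φ` is `C²`; differentiating once more expresses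
`φ''` through `F''`, `G''(φ)` and `C¹` quantities, all bounded and `α`-Hölder on the compact
convex disk (for `G''(φ)` because `φ` is Lipschitz), so `φ''` is `α`-Hölder. Exchanging the roles
of `F` and `G` gives the same for `ψ = φ⁻¹`.
-/

open Metric Set ContinuousLinearMap
open scoped NNReal ENNReal

section SecondDerivative

variable {𝕜 E F : Type*} [NontriviallyNormedField 𝕜] [NormedAddCommGroup E] [NormedSpace 𝕜 E]
  [NormedAddCommGroup F] [NormedSpace 𝕜 F] {s : Set E}

theorem iteratedFDerivWithin_one_eq_curryFin1_symm {g : E → F} {x : E}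
    (hx : UniqueDiffWithinAt 𝕜 s x) :
    iteratedFDerivWithin 𝕜 1 g s x =
      (continuousMultilinearCurryFin1 𝕜 E F).symm (fderivWithin 𝕜 g s x) := by
  ext m
  simp [hx]

theorem edist_iteratedFDerivWithin_two (hs : UniqueDiffOn 𝕜 s) (f : E → F) {x y : E}
    (hx : x ∈ s) (hy : y ∈ s) :
    edist (iteratedFDerivWithin 𝕜 2 f s x) (iteratedFDerivWithin 𝕜 2 f s y) =
      edist (fderivWithin 𝕜 (fderivWithin 𝕜 f s) s x)
        (fderivWithin 𝕜 (fderivWithin 𝕜 f s) s y) := by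
  rw [iteratedFDerivWithin_succ_eq_comp_right hs hx, iteratedFDerivWithin_succ_eq_comp_right hs hy]
  simp only [Function.comp_apply, LinearIsometryEquiv.edist_map,
    iteratedFDerivWithin_one_eq_curryFin1_symm (hs x hx),
    iteratedFDerivWithin_one_eq_curryFin1_symm (hs y hy)]

theorem holderOnWith_iteratedFDerivWithin_two_iff (hs : UniqueDiffOn 𝕜 s) {f : E → F}
    {C α : ℝ≥0} :
    HolderOnWith C α (iteratedFDerivWithin 𝕜 2 f s) s ↔
      HolderOnWith C α (fderivWithin 𝕜 (fderivWithin 𝕜 f s) s) s := by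
  refine forall₂_congr fun x hx => forall₂_congr fun y hy => ?_
  rw [edist_iteratedFDerivWithin_two hs f hx hy]

end SecondDerivative

def HolderBoundedOn {X Y : Type*} [PseudoEMetricSpace X] [SeminormedAddCommGroup Y]
    (α : ℝ≥0) (f : X → Y) (s : Set X) : Prop :=
  ∃ C M : ℝ≥0, HolderOnWith C α f s ∧ ∀ x ∈ s, ‖f x‖₊ ≤ M

namespace HolderBoundedOn

section Algebra

variable {𝕜 X Y Z W : Type*} [NontriviallyNormedField 𝕜] [PseudoEMetricSpace X]
  [SeminormedAddCommGroup Y] [NormedSpace 𝕜 Y] [SeminormedAddCommGroup Z] [NormedSpace 𝕜 Z]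
  [SeminormedAddCommGroup W] [NormedSpace 𝕜 W] {α : ℝ≥0} {s : Set X}

theorem congr {f g : X → Y} (hf : HolderBoundedOn α f s) (hfg : EqOn f g s) :
    HolderBoundedOn α g s := by
  obtain ⟨C, M, hC, hM⟩ := hf
  refine ⟨C, M, fun x hx y hy => ?_, fun x hx => hfg hx ▸ hM x hx⟩
  rw [← hfg hx, ← hfg hy]
  exact hC.edist_le hx hy

theorem add {f g : X → Y} (hf : HolderBoundedOn α f s) (hg : HolderBoundedOn α g s) :
    HolderBoundedOn α (fun x => f x + g x) s := by
  obtain ⟨C, M, hC, hM⟩ := hf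
  obtain ⟨C', M', hC', hM'⟩ := hg
  refine ⟨C + C', M + M', fun x hx y hy => ?_, fun x hx => ?_⟩
  · grw [edist_add_add_le, hC.edist_le hx hy, hC'.edist_le hx hy, ENNReal.coe_add, add_mul]
  · grw [nnnorm_add_le, hM x hx, hM' x hx]

theorem clm_apply {f : X → Y} (L : Y →L[𝕜] Z) (hf : HolderBoundedOn α f s) :
    HolderBoundedOn α (fun x => L (f x)) s := by
  obtain ⟨C, M, hC, hM⟩ := hf
  refine ⟨‖L‖₊ * C, ‖L‖₊ * M, fun x hx y hy => ?_, fun x hx => ?_⟩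
  · grw [L.lipschitz.edist_le_mul, hC.edist_le hx hy, ENNReal.coe_mul, mul_assoc]
  · grw [L.le_opNNNorm, hM x hx]

/-- The Hölder constant comes from
`u x ∘ v x - u y ∘ v y = (u x - u y) ∘ v x + u y ∘ (v x - v y)`. -/
theorem clm_comp {u : X → Z →L[𝕜] W} {v : X → Y →L[𝕜] Z} (hu : HolderBoundedOn α u s)
    (hv : HolderBoundedOn α v s) : HolderBoundedOn α (fun x => (u x).comp (v x)) s := by
  obtain ⟨Cu, Mu, hCu, hMu⟩ := hu
  obtain ⟨Cv, Mv, hCv, hMv⟩ := hv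
  refine ⟨Cu * Mv + Mu * Cv, Mu * Mv, fun x hx y hy => ?_, fun x hx => ?_⟩
  · have hsplit : (u x).comp (v x) - (u y).comp (v y) =
        (u x - u y).comp (v x) + (u y).comp (v x - v y) := by
      simp only [sub_comp, comp_sub]
      abel
    have hnorm : ‖(u x).comp (v x) - (u y).comp (v y)‖₊ ≤
        ‖u x - u y‖₊ * Mv + Mu * ‖v x - v y‖₊ := by
      rw [hsplit]
      grw [nnnorm_add_le, opNNNorm_comp_le, opNNNorm_comp_le, hMv x hx, hMu y hy]
    calc edist ((u x).comp (v x)) ((u y).comp (v y))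
        ≤ edist (u x) (u y) * Mv + Mu * edist (v x) (v y) := by
          simp only [edist_nndist, nndist_eq_nnnorm]
          exact_mod_cast hnorm
      _ ≤ Cu * edist x y ^ (α : ℝ) * Mv + Mu * (Cv * edist x y ^ (α : ℝ)) := by
          grw [hCu.edist_le hx hy, hCv.edist_le hx hy]
      _ = ↑(Cu * Mv + Mu * Cv) * edist x y ^ (α : ℝ) := by
          push_cast
          ring
  · grw [opNNNorm_comp_le, hMu x hx, hMv x hx]

end Algebra

section Constructors

variable {X Y Z : Type*} [PseudoMetricSpace X] [PseudoMetricSpace Z] [SeminormedAddCommGroup Y]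
  {α : ℝ≥0} {s : Set X}

theorem of_holderOnWith {C : ℝ≥0} {f : X → Y} (hs : IsCompact s) (hf : HolderOnWith C α f s)
    (hfc : ContinuousOn f s) : HolderBoundedOn α f s := by
  obtain ⟨M, hM⟩ := hs.exists_bound_of_continuousOn hfc
  exact ⟨C, M.toNNReal, hf, fun x hx => by simpa using Real.toNNReal_le_toNNReal (hM x hx)⟩

theorem of_lipschitzOnWith {K : ℝ≥0} {f : X → Y} (hs : IsCompact s) (hα : α ≤ 1)
    (hf : LipschitzOnWith K f s) : HolderBoundedOn α f s := by
  obtain ⟨D, hD⟩ := isBounded_iff.mp hs.isBounded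
  have hedist : ∀ x ∈ s, ∀ y ∈ s, edist x y ≤ D.toNNReal := fun x hx y hy =>
    (edist_le_ofReal (le_trans dist_nonneg (hD hx hy))).mpr (hD hx hy)
  exact of_holderOnWith hs (hf.holderOnWith.of_le hedist hα) hf.continuousOn

theorem comp_lipschitzOnWith {K : ℝ≥0} {g : Z → Y} {f : X → Z} {t : Set Z}
    (hg : HolderBoundedOn α g t) (hf : LipschitzOnWith K f s) (hst : MapsTo f s t) :
    HolderBoundedOn α (fun x => g (f x)) s := by
  obtain ⟨C, M, hC, hM⟩ := hg
  exact ⟨C * K ^ (α : ℝ), M, by simpa [Function.comp_def] using hC.comp hf.holderOnWith hst,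
    fun x hx => hM _ (hst hx)⟩

end Constructors

variable {E F Y Z : Type*} [NormedAddCommGroup E] [NormedSpace ℝ E] [NormedAddCommGroup F]
  [NormedSpace ℝ F] [NormedAddCommGroup Y] [NormedSpace ℝ Y] [NormedAddCommGroup Z]
  [NormedSpace ℝ Z] {α : ℝ≥0} {s : Set E} {t : Set F}

theorem of_contDiffOn {f : E → Y} (hs : IsCompact s) (hsc : Convex ℝ s) (hα : α ≤ 1)
    (hf : ContDiffOn ℝ 1 f s) : HolderBoundedOn α f s :=
  of_lipschitzOnWith hs hα (hf.exists_lipschitzOnWith one_ne_zero hsc hs).choose_spec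

theorem fderivWithin_clm_comp (hs : UniqueDiffOn ℝ s) {u : E → Y →L[ℝ] Z} {v : E → F →L[ℝ] Y}
    (hu : DifferentiableOn ℝ u s) (hv : DifferentiableOn ℝ v s)
    (hu₀ : HolderBoundedOn α u s) (hv₀ : HolderBoundedOn α v s)
    (hu₁ : HolderBoundedOn α (fderivWithin ℝ u s) s)
    (hv₁ : HolderBoundedOn α (fderivWithin ℝ v s) s) :
    HolderBoundedOn α (fderivWithin ℝ (fun x => (u x).comp (v x)) s) s := by
  have hformula : HolderBoundedOn α (fun x => (compL ℝ F Y Z (u x)).comp (fderivWithin ℝ v s x) +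
      ((compL ℝ F Y Z).flip (v x)).comp (fderivWithin ℝ u s x)) s :=
    ((hu₀.clm_apply _).clm_comp hv₁).add ((hv₀.clm_apply _).clm_comp hu₁)
  exact hformula.congr fun x hx =>
    (_root_.fderivWithin_clm_comp (hs x hx) (hu x hx) (hv x hx)).symm

theorem fderivWithin_comp (hs : UniqueDiffOn ℝ s) {K : ℝ≥0} {g : F → Y} {f : E → F}
    (hg : DifferentiableOn ℝ g t) (hf : DifferentiableOn ℝ f s)
    (hg₁ : HolderBoundedOn α (fderivWithin ℝ g t) t)
    (hf₁ : HolderBoundedOn α (fderivWithin ℝ f s) s)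
    (hfK : LipschitzOnWith K f s) (hst : MapsTo f s t) :
    HolderBoundedOn α (fderivWithin ℝ (fun x => g (f x)) s) s :=
  ((hg₁.comp_lipschitzOnWith hfK hst).clm_comp hf₁).congr
    fun x hx => (_root_.fderivWithin_comp x (hg _ (hst hx)) (hf x hx) hst (hs x hx)).symm

end HolderBoundedOn

namespace ContinuousLinearMap

variable {E F : Type*} [NormedAddCommGroup E] [InnerProductSpace ℝ E] [FiniteDimensional ℝ E]
  [NormedAddCommGroup F] [InnerProductSpace ℝ F] [CompleteSpace F]

/-- Over `ℝ` the adjoint is linear, not just conjugate-linear. -/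
noncomputable def adjointCLM : (E →L[ℝ] F) →L[ℝ] (F →L[ℝ] E) :=
  LinearMap.mkContinuous
    { toFun := adjoint
      map_add' := map_add adjoint
      map_smul' := fun c A => by simp }
    1 fun A => by simp

@[simp]
theorem adjointCLM_apply (A : E →L[ℝ] F) : adjointCLM A = adjoint A :=
  rfl

theorem isUnit_adjoint_comp_self {A : E →L[ℝ] F} (hA : Function.Injective A) :
    IsUnit (adjoint A ∘L A) := by
  have hinj : Function.Injective (adjoint A ∘L A) := by
    rw [coe_comp]
    exact A.adjoint_comp_self_injective_iff.mpr hA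
  exact isUnit_iff_bijective.mpr
    ⟨hinj, LinearMap.injective_iff_surjective (f := (adjoint A ∘L A : E →ₗ[ℝ] E)).mp hinj⟩

/-- The Moore–Penrose pseudo-inverse `(A†A)⁻¹A†`; a left inverse of `A` when `A` is injective
(otherwise `Ring.inverse` returns the junk value `0`). -/
noncomputable def pseudoInv (A : E →L[ℝ] F) : F →L[ℝ] E :=
  Ring.inverse (adjointCLM A ∘L A) ∘L adjointCLM A

theorem pseudoInv_comp_self {A : E →L[ℝ] F} (hA : Function.Injective A) :
    pseudoInv A ∘L A = ContinuousLinearMap.id ℝ E := by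
  rw [pseudoInv, adjointCLM_apply, comp_assoc, ← mul_def,
    Ring.inverse_mul_cancel _ (isUnit_adjoint_comp_self hA), one_def]

theorem contDiffAt_pseudoInv {A : E →L[ℝ] F} (hA : Function.Injective A) {n : WithTop ℕ∞} :
    ContDiffAt ℝ n pseudoInv A := by
  have hadj : ContDiff ℝ n (adjointCLM (E := E) (F := F)) := ContinuousLinearMap.contDiff _
  have hgram : ContDiff ℝ n fun B : E →L[ℝ] F => adjointCLM B ∘L B := hadj.clm_comp contDiff_id
  obtain ⟨u, hu⟩ := isUnit_adjoint_comp_self hA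
  have hinv : ContDiffAt ℝ n Ring.inverse (adjointCLM A ∘L A) := by
    rw [adjointCLM_apply, ← hu]
    exact contDiffAt_ringInverse ℝ u
  exact (hinv.comp (f := fun B => adjointCLM B ∘L B) A hgram.contDiffAt).clm_comp hadj.contDiffAt

end ContinuousLinearMap

section Bootstrap

variable {E E' V Y : Type*} [NormedAddCommGroup E] [NormedSpace ℝ E]
  [NormedAddCommGroup E'] [InnerProductSpace ℝ E'] [FiniteDimensional ℝ E']
  [NormedAddCommGroup V] [InnerProductSpace ℝ V] [CompleteSpace V]
  [NormedAddCommGroup Y] [NormedSpace ℝ Y] {α : ℝ≥0} {s : Set E} {t : Set E'}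

theorem ContDiffOn.pseudoInv {n : WithTop ℕ∞} {h : E → E' →L[ℝ] V} (hh : ContDiffOn ℝ n h s)
    (hinj : ∀ x ∈ s, Function.Injective (h x)) :
    ContDiffOn ℝ n (fun x => pseudoInv (h x)) s := fun x hx =>
  (contDiffAt_pseudoInv (hinj x hx)).comp_contDiffWithinAt x (hh x hx)

theorem HolderBoundedOn.fderivWithin_pseudoInv (hs : UniqueDiffOn ℝ s) (hsc : Convex ℝ s)
    (hsk : IsCompact s) (hα : α ≤ 1) {h : E → E' →L[ℝ] V} (hh : ContDiffOn ℝ 1 h s)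
    (hinj : ∀ x ∈ s, Function.Injective (h x)) (hh₁ : HolderBoundedOn α (fderivWithin ℝ h s) s) :
    HolderBoundedOn α (fderivWithin ℝ (fun x => pseudoInv (h x)) s) s := by
  have hDinv : ContDiffOn ℝ 1 (fun x => fderiv ℝ pseudoInv (h x)) s := fun x hx =>
    ((contDiffAt_pseudoInv (n := 2) (hinj x hx)).fderiv_right (by norm_num)).comp_contDiffWithinAt
      x (hh x hx)
  refine ((HolderBoundedOn.of_contDiffOn hsk hsc hα hDinv).clm_comp hh₁).congr fun x hx => ?_
  exact (fderiv_comp_fderivWithin x ((contDiffAt_pseudoInv (n := 1) (hinj x hx)).differentiableAt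
    one_ne_zero) (hh.differentiableOn one_ne_zero x hx) (hs x hx)).symm

theorem fderivWithin_eq_pseudoInv_comp (hs : UniqueDiffOn ℝ s) {F : E → V} {G : E' → V}
    {φ : E → E'} (hG : DifferentiableOn ℝ G t)
    (hGimm : ∀ y ∈ t, Function.Injective (fderivWithin ℝ G t y)) (hφ : DifferentiableOn ℝ φ s)
    (hst : MapsTo φ s t) (hFG : EqOn F (G ∘ φ) s) :
    EqOn (fderivWithin ℝ φ s)
      (fun x => pseudoInv (fderivWithin ℝ G t (φ x)) ∘L fderivWithin ℝ F s x) s := by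
  intro x hx
  dsimp only
  rw [fderivWithin_congr hFG (hFG hx), fderivWithin_comp x (hG _ (hst hx)) (hφ x hx) hst (hs x hx),
    ← comp_assoc, pseudoInv_comp_self (hGimm _ (hst hx)), id_comp]

/-- `f` is `C^{2,α}` on `s`. -/
def ContDiffHolderOn (α : ℝ≥0) (f : E → Y) (s : Set E) : Prop :=
  ContDiffOn ℝ 2 f s ∧ ∃ C, HolderOnWith C α (iteratedFDerivWithin ℝ 2 f s) s

theorem ContDiffHolderOn.holderBoundedOn_fderivWithin_fderivWithin (hs : UniqueDiffOn ℝ s)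
    (hsk : IsCompact s) {f : E → Y} (hf : ContDiffHolderOn α f s) :
    HolderBoundedOn α (fderivWithin ℝ (fderivWithin ℝ f s) s) s := by
  obtain ⟨hf₂, C, hC⟩ := hf
  exact .of_holderOnWith hsk ((holderOnWith_iteratedFDerivWithin_two_iff hs).mp hC)
    ((hf₂.fderivWithin hs (m := 1) (by norm_num)).continuousOn_fderivWithin hs le_rfl)

theorem ContDiffHolderOn.of_comp_eq (hs : UniqueDiffOn ℝ s) (hsc : Convex ℝ s)
    (hsk : IsCompact s) (ht : UniqueDiffOn ℝ t) (htk : IsCompact t) (hα : α ≤ 1)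
    {F : E → V} {G : E' → V} {φ : E → E'} (hF : ContDiffHolderOn α F s)
    (hG : ContDiffHolderOn α G t) (hGimm : ∀ y ∈ t, Function.Injective (fderivWithin ℝ G t y))
    (hφ : ContDiffOn ℝ 1 φ s) (hst : MapsTo φ s t) (hFG : EqOn F (G ∘ φ) s) :
    ContDiffHolderOn α φ s := by
  have hφ' := fderivWithin_eq_pseudoInv_comp hs (hG.1.differentiableOn (by norm_num)) hGimm
    (hφ.differentiableOn one_ne_zero) hst hFG
  have hG' : ContDiffOn ℝ 1 (fderivWithin ℝ G t) t := hG.1.fderivWithin ht (by norm_num)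
  have hF' : ContDiffOn ℝ 1 (fderivWithin ℝ F s) s := hF.1.fderivWithin hs (by norm_num)
  have hG'φ : ContDiffOn ℝ 1 (fun x => fderivWithin ℝ G t (φ x)) s := hG'.comp hφ hst
  have hinj : ∀ x ∈ s, Function.Injective (fderivWithin ℝ G t (φ x)) :=
    fun x hx => hGimm _ (hst hx)
  have hq := hG'φ.pseudoInv hinj
  have hφ'₁ : ContDiffOn ℝ 1 (fderivWithin ℝ φ s) s := (hq.clm_comp hF').congr hφ'
  have hφ₂ : ContDiffOn ℝ 2 φ s :=
    (contDiffOn_succ_iff_fderivWithin (n := 1) hs).mpr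
      ⟨hφ.differentiableOn one_ne_zero, by simp, hφ'₁⟩
  obtain ⟨K, hK⟩ := hφ.exists_lipschitzOnWith one_ne_zero hsc hsk
  have hG'φ₁ : HolderBoundedOn α (fderivWithin ℝ (fun x => fderivWithin ℝ G t (φ x)) s) s :=
    .fderivWithin_comp hs (hG'.differentiableOn one_ne_zero) (hφ.differentiableOn one_ne_zero)
      (hG.holderBoundedOn_fderivWithin_fderivWithin ht htk)
      (.of_contDiffOn hsk hsc hα hφ'₁) hK hst
  have hφ'' : HolderBoundedOn α (fderivWithin ℝ (fderivWithin ℝ φ s) s) s :=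
    (HolderBoundedOn.fderivWithin_clm_comp hs (hq.differentiableOn one_ne_zero)
      (hF'.differentiableOn one_ne_zero) (.of_contDiffOn hsk hsc hα hq)
      (.of_contDiffOn hsk hsc hα hF')
      (.fderivWithin_pseudoInv hs hsc hsk hα hG'φ hinj hG'φ₁)
      (hF.holderBoundedOn_fderivWithin_fderivWithin hs hsk)).congr
      fun x hx => (fderivWithin_congr hφ' (hφ' hx)).symm
  obtain ⟨C, -, hC, -⟩ := hφ''
  exact ⟨hφ₂, C, (holderOnWith_iteratedFDerivWithin_two_iff hs).mpr hC⟩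

end Bootstrap

theorem stmt_0_general (α : NNReal) (hα1 : (α : ℝ) < 1)
    (F G : EuclideanSpace ℝ (Fin 2) → EuclideanSpace ℝ (Fin 3))
    (φ ψ : EuclideanSpace ℝ (Fin 2) → EuclideanSpace ℝ (Fin 2))
    (D : Set (EuclideanSpace ℝ (Fin 2)))
    (hD : D = closedBall 0 1)
    (hF : ContDiffOn ℝ 2 F D)
    (hFα : ∃ C, HolderOnWith C α (iteratedFDerivWithin ℝ 2 F D) D)
    (hFimm : ∀ p ∈ D, Function.Injective (fderivWithin ℝ F D p))
    (hG : ContDiffOn ℝ 2 G D)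
    (hGα : ∃ C, HolderOnWith C α (iteratedFDerivWithin ℝ 2 G D) D)
    (hGimm : ∀ p ∈ D, Function.Injective (fderivWithin ℝ G D p))
    (hφ : ContDiffOn ℝ 1 φ D) (hψ : ContDiffOn ℝ 1 ψ D)
    (hφD : Set.MapsTo φ D D) (hψD : Set.MapsTo ψ D D)
    (hinv : Set.InvOn ψ φ D D)
    (hFG : ∀ p ∈ D, F p = G (φ p)) :
    ContDiffOn ℝ 2 φ D ∧ (∃ C, HolderOnWith C α (iteratedFDerivWithin ℝ 2 φ D) D) ∧
    ContDiffOn ℝ 2 ψ D ∧ (∃ C, HolderOnWith C α (iteratedFDerivWithin ℝ 2 ψ D) D) := by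
  have hDc : Convex ℝ D := hD ▸ convex_closedBall 0 1
  have hDk : IsCompact D := hD ▸ isCompact_closedBall 0 1
  have hDu : UniqueDiffOn ℝ D := uniqueDiffOn_convex hDc ⟨0, by simp [hD, interior_closedBall]⟩
  have hα : α ≤ 1 := by exact_mod_cast hα1.le
  have hGF : EqOn G (F ∘ ψ) D := fun p hp => by
    rw [Function.comp_apply, hFG _ (hψD hp), hinv.2 hp]
  obtain ⟨hφ₂, hφα⟩ := ContDiffHolderOn.of_comp_eq hDu hDc hDk hDu hDk hα ⟨hF, hFα⟩ ⟨hG, hGα⟩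
    hGimm hφ hφD hFG
  obtain ⟨hψ₂, hψα⟩ := ContDiffHolderOn.of_comp_eq hDu hDc hDk hDu hDk hα ⟨hG, hGα⟩ ⟨hF, hFα⟩
    hFimm hψ hψD hGF
  exact ⟨hφ₂, hφα, hψ₂, hψα⟩

/-- If `F, G : D → ℝ³` are `C^{2,α}` immersions of the closed unit disk
(`0 < α < 1`) and `φ` is a `C¹` diffeomorphism of `D` fixing `∂D` pointwise with
`F = G ∘ φ` on `D`, then `φ` (and its inverse `ψ`) is a `C^{2,α}` diffeomorphism. -/
theorem stmt_0 (α : NNReal) (hα0 : 0 < α) (hα1 : (α : ℝ) < 1)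
    (F G : EuclideanSpace ℝ (Fin 2) → EuclideanSpace ℝ (Fin 3))
    (φ ψ : EuclideanSpace ℝ (Fin 2) → EuclideanSpace ℝ (Fin 2))
    (D : Set (EuclideanSpace ℝ (Fin 2)))
    (hD : D = closedBall 0 1)
    (hF : ContDiffOn ℝ 2 F D)
    (hFα : ∃ C, HolderOnWith C α (iteratedFDerivWithin ℝ 2 F D) D)
    (hFimm : ∀ p ∈ D, Function.Injective (fderivWithin ℝ F D p))
    (hG : ContDiffOn ℝ 2 G D)
    (hGα : ∃ C, HolderOnWith C α (iteratedFDerivWithin ℝ 2 G D) D)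
    (hGimm : ∀ p ∈ D, Function.Injective (fderivWithin ℝ G D p))
    (hφ : ContDiffOn ℝ 1 φ D) (hψ : ContDiffOn ℝ 1 ψ D)
    (hφD : Set.MapsTo φ D D) (hψD : Set.MapsTo ψ D D)
    (hinv : Set.InvOn ψ φ D D)
    (hbd : ∀ p ∈ sphere (0 : EuclideanSpace ℝ (Fin 2)) 1, φ p = p)
    (hFG : ∀ p ∈ D, F p = G (φ p)) :
    ContDiffOn ℝ 2 φ D ∧ (∃ C, HolderOnWith C α (iteratedFDerivWithin ℝ 2 φ D) D) ∧
    ContDiffOn ℝ 2 ψ D ∧ (∃ C, HolderOnWith C α (iteratedFDerivWithin ℝ 2 ψ D) D) :=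
  stmt_0_general α hα1 F G φ ψ D hD hF hFα hFimm hG hGα hGimm hφ hψ hφD hψD hinv hFG
end

section
/- A local C¹ diffeomorphism Y : D → ℝ² of the closed unit disk that restricts to the identity on ∂D is a global diffeomorphism of D onto D. -/
/-!
On the open ball `B` the map is a local homeomorphism, hence open, so `‖f‖` has no maximum in `B`;
as `f = id` on the sphere, `f` maps the closed ball `D` into `D` and `B` into `B`. Then `f(B)` is
open, `f(D)` is closed and `B` is connected, so `B ⊆ f(B)`.

For injectivity, having at most one preimage in `D` is an open condition on `B` (compactness of
`D` and local injectivity), and so is having two (openness of `f` near two distinct preimages),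
so by connectedness it suffices to find one point of `B` with a single preimage. Near a point `p`
of the sphere, the derivative within `D` being invertible and continuous makes `f` injective on
`D ∩ U`, and the points of `B` close to `f p = p` have all their preimages in `U`.
-/

open Metric Set Filter Topology
open scoped NNReal

section Topology

variable {X Z : Type*} [TopologicalSpace X] [TopologicalSpace Z] {f : X → Z} {s : Set X}

theorem IsLocalHomeomorphOn.image_mem_nhds (hf : IsLocalHomeomorphOn f s) {x : X} (hx : x ∈ s)
    {t : Set X} (ht : t ∈ 𝓝 x) : f '' t ∈ 𝓝 (f x) :=
  hf.map_nhds_eq hx ▸ image_mem_map ht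

theorem IsLocalHomeomorphOn.exists_mem_nhds_injOn (hf : IsLocalHomeomorphOn f s) {x : X}
    (hx : x ∈ s) : ∃ U ∈ 𝓝 x, InjOn f U := by
  obtain ⟨e, hxe, rfl⟩ := hf x hx
  exact ⟨e.source, e.open_source.mem_nhds hxe, e.injOn⟩

theorem IsLocalHomeomorphOn.eventually_nontrivial_fiber [T2Space X]
    (hf : IsLocalHomeomorphOn f s) (hs : IsOpen s) {x y : X} (hx : x ∈ s) (hy : y ∈ s)
    (hne : x ≠ y) (hxy : f x = f y) : ∀ᶠ z in 𝓝 (f x), (s ∩ f ⁻¹' {z}).Nontrivial := by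
  obtain ⟨U, V, hU, hV, hUV⟩ := t2_separation_nhds hne
  have hfU := hf.image_mem_nhds hx (inter_mem hU (hs.mem_nhds hx))
  have hfV := hf.image_mem_nhds hy (inter_mem hV (hs.mem_nhds hy))
  rw [← hxy] at hfV
  filter_upwards [hfU, hfV] with z ⟨a, ⟨haU, has⟩, ha⟩ ⟨b, ⟨hbV, hbs⟩, hb⟩
  exact ⟨a, ⟨has, ha⟩, b, ⟨hbs, hb⟩, hUV.ne_of_mem haU hbV⟩

theorem IsCompact.eventually_subsingleton_fiber [T2Space Z] {K U : Set X} (hK : IsCompact K)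
    (hf : ContinuousOn f K) {x : X} (hx : x ∈ K) (hU : U ∈ 𝓝 x) (hinj : InjOn f (K ∩ U))
    (hfib : (K ∩ f ⁻¹' {f x}).Subsingleton) :
    ∀ᶠ z in 𝓝 (f x), (K ∩ f ⁻¹' {z}).Subsingleton := by
  have hC : IsCompact (f '' (K \ interior U)) :=
    (hK.diff isOpen_interior).image_of_continuousOn (hf.mono sdiff_subset)
  have hxC : f x ∉ f '' (K \ interior U) := by
    rintro ⟨a, ⟨haK, haU⟩, ha⟩
    rw [hfib ⟨haK, ha⟩ ⟨hx, rfl⟩] at haU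
    exact haU (mem_interior_iff_mem_nhds.2 hU)
  have hmem : ∀ z ∉ f '' (K \ interior U), ∀ a ∈ K ∩ f ⁻¹' {z}, a ∈ K ∩ U := fun z hz a ha =>
    ⟨ha.1, interior_subset (by_contra fun h => hz ⟨a, ⟨ha.1, h⟩, ha.2⟩)⟩
  filter_upwards [hC.isClosed.isOpen_compl.mem_nhds hxC] with z hz a ha b hb
  exact hinj (hmem z hz a ha) (hmem z hz b hb) (ha.2.trans hb.2.symm)

end Topology

section NormedSpace

variable {E : Type*} [NormedAddCommGroup E] [NormedSpace ℝ E]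

theorem exists_mem_norm_lt_of_mem_nhds [Nontrivial E] {v : E} {s : Set E} (hs : s ∈ 𝓝 v) :
    ∃ w ∈ s, ‖v‖ < ‖w‖ := by
  by_contra! h
  have hv : v ∈ interior (closedBall (0 : E) ‖v‖) :=
    mem_interior_iff_mem_nhds.2 (mem_of_superset hs fun w hw => by simpa using h w hw)
  simp [interior_closedBall'] at hv

end NormedSpace

section Calculus

variable {E F : Type*} [NormedAddCommGroup E] [NormedSpace ℝ E] [NormedAddCommGroup F]
  [NormedSpace ℝ F] {f : E → F}

theorem ContDiffOn.isLocalHomeomorphOn [CompleteSpace E] {U : Set E} (hU : IsOpen U)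
    (hf : ContDiffOn ℝ 1 f U) (hf' : ∀ x ∈ U, ∃ e : E ≃L[ℝ] F, fderiv ℝ f x = e) :
    IsLocalHomeomorphOn f U := by
  intro x hx
  obtain ⟨e, he⟩ := hf' x hx
  have hfx : ContDiffAt ℝ 1 f x := hf.contDiffAt (hU.mem_nhds hx)
  have hder : HasFDerivAt f (e : E →L[ℝ] F) x :=
    he ▸ (hfx.differentiableAt one_ne_zero).hasFDerivAt
  exact ⟨hfx.toOpenPartialHomeomorph f hder one_ne_zero,
    hfx.mem_toOpenPartialHomeomorph_source hder one_ne_zero, rfl⟩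

theorem Convex.exists_mem_nhds_injOn_inter {s : Set E} {p : E} (hs : Convex ℝ s)
    (hf : DifferentiableOn ℝ f s) (hcont : ContinuousWithinAt (fderivWithin ℝ f s) s p)
    (e : E ≃L[ℝ] F) (he : fderivWithin ℝ f s p = e) : ∃ U ∈ 𝓝 p, InjOn f (s ∩ U) := by
  obtain hE | hN := e.subsingleton_or_nnnorm_symm_pos
  · exact ⟨univ, univ_mem, fun x _ y _ _ => Subsingleton.elim x y⟩
  set c : ℝ≥0 := ‖(e.symm : F →L[ℝ] E)‖₊⁻¹ / 2
  have hc : 0 < c := half_pos (inv_pos.2 hN)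
  obtain ⟨ε, hε, hball⟩ := mem_nhdsWithin_iff.1 (he ▸ hcont (ball_mem_nhds _ hc))
  have happrox : ApproximatesLinearOn f (e : E →L[ℝ] F) (s ∩ ball p ε) c :=
    fun x hx y hy => (hs.inter (convex_ball p ε)).norm_image_sub_le_of_norm_hasFDerivWithin_le'
      (fun z hz => (hf z hz.1).hasFDerivWithinAt.mono inter_subset_left)
      (fun z hz => (mem_ball_iff_norm.1 (hball ⟨hz.2, hz.1⟩)).le) hy hx
  exact ⟨ball p ε, ball_mem_nhds p hε,
    happrox.injOn (Or.inr (NNReal.half_lt_self (inv_pos.2 hN).ne'))⟩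

end Calculus

section UnitBall

variable {E : Type*} [NormedAddCommGroup E] {f : E → E}

theorem mem_ball_of_apply_mem_ball (hbd : ∀ p ∈ sphere (0 : E) 1, f p = p) {x : E}
    (hx : x ∈ closedBall 0 1) (hfx : f x ∈ ball 0 1) : x ∈ ball 0 1 := by
  by_contra h
  rw [hbd x (closedBall_sdiff_ball (x := 0).subset ⟨hx, h⟩)] at hfx
  exact h hfx

variable [NormedSpace ℝ E] [Nontrivial E]

theorem exists_norm_lt_norm_apply (hloc : IsLocalHomeomorphOn f (ball 0 1)) {x : E}
    (hx : x ∈ ball 0 1) : ∃ x' ∈ ball (0 : E) 1, ‖f x‖ < ‖f x'‖ := by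
  obtain ⟨_, ⟨x', hx', rfl⟩, hlt⟩ :=
    exists_mem_norm_lt_of_mem_nhds (hloc.image_mem_nhds hx (isOpen_ball.mem_nhds hx))
  exact ⟨x', hx', hlt⟩

variable [ProperSpace E]

theorem norm_apply_le_one (hcont : ContinuousOn f (closedBall 0 1))
    (hloc : IsLocalHomeomorphOn f (ball 0 1)) (hbd : ∀ p ∈ sphere (0 : E) 1, f p = p) {x : E}
    (hx : x ∈ closedBall 0 1) : ‖f x‖ ≤ 1 := by
  obtain ⟨x₀, hx₀, hmax⟩ := (isCompact_closedBall (0 : E) 1).exists_isMaxOn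
    (nonempty_closedBall.2 zero_le_one) hcont.norm
  have hx₀S : x₀ ∈ sphere 0 1 := by
    by_contra h
    obtain ⟨x', hx', hlt⟩ :=
      exists_norm_lt_norm_apply hloc (closedBall_sdiff_sphere (x := 0).subset ⟨hx₀, h⟩)
    exact (hmax (ball_subset_closedBall hx')).not_gt hlt
  calc ‖f x‖ ≤ ‖f x₀‖ := hmax hx
    _ = 1 := by rw [hbd x₀ hx₀S, mem_sphere_zero_iff_norm.1 hx₀S]

theorem mapsTo_ball (hcont : ContinuousOn f (closedBall 0 1))
    (hloc : IsLocalHomeomorphOn f (ball 0 1)) (hbd : ∀ p ∈ sphere (0 : E) 1, f p = p) :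
    MapsTo f (ball 0 1) (ball 0 1) := fun x hx => by
  obtain ⟨x', hx', hlt⟩ := exists_norm_lt_norm_apply hloc hx
  exact mem_ball_zero_iff.2 <|
    hlt.trans_le (norm_apply_le_one hcont hloc hbd (ball_subset_closedBall hx'))

theorem ball_subset_image_ball (hcont : ContinuousOn f (closedBall 0 1))
    (hloc : IsLocalHomeomorphOn f (ball 0 1)) (hbd : ∀ p ∈ sphere (0 : E) 1, f p = p) :
    ball 0 1 ⊆ f '' ball 0 1 := by
  have hopen : IsOpen (f '' ball 0 1) := isOpen_iff_mem_nhds.2 <|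
    forall_mem_image.2 fun x hx => hloc.image_mem_nhds hx (isOpen_ball.mem_nhds hx)
  have hclosed : IsClosed (f '' closedBall 0 1) :=
    ((isCompact_closedBall 0 1).image_of_continuousOn hcont).isClosed
  have h0 : (0 : E) ∈ ball 0 1 := mem_ball_self one_pos
  refine (convex_ball (0 : E) 1).isPreconnected.subset_left_of_subset_union hopen
    hclosed.isOpen_compl (disjoint_compl_right_iff_subset.2 (image_mono ball_subset_closedBall))
    (fun q hq => ?_) ⟨f 0, mapsTo_ball hcont hloc hbd h0, 0, h0, rfl⟩
  by_cases h : q ∈ f '' closedBall 0 1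
  · obtain ⟨x, hx, rfl⟩ := h
    exact Or.inl ⟨x, mem_ball_of_apply_mem_ball hbd hx hq, rfl⟩
  · exact Or.inr h

theorem exists_mem_ball_subsingleton_fiber (hcont : ContinuousOn f (closedBall 0 1))
    (hloc : IsLocalHomeomorphOn f (ball 0 1)) (hbd : ∀ p ∈ sphere (0 : E) 1, f p = p) {p : E}
    {U : Set E} (hp : p ∈ sphere 0 1) (hU : U ∈ 𝓝 p) (hinj : InjOn f (closedBall 0 1 ∩ U)) :
    ∃ q ∈ ball (0 : E) 1, (closedBall 0 1 ∩ f ⁻¹' {q}).Subsingleton := by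
  have hfiber : ∀ z ∈ closedBall 0 1 ∩ f ⁻¹' {f p}, z = p := by
    rintro z ⟨hz, hzp⟩
    have hpB : p ∉ ball (0 : E) 1 := by simp [mem_sphere_zero_iff_norm.1 hp]
    have hzS : z ∈ sphere 0 1 := closedBall_sdiff_ball (x := 0).subset
      ⟨hz, fun hzB => hpB (hbd p hp ▸ hzp ▸ mapsTo_ball hcont hloc hbd hzB)⟩
    rw [← hbd z hzS, hzp, hbd p hp]
  have hnear := (isCompact_closedBall 0 1).eventually_subsingleton_fiber hcont
    (sphere_subset_closedBall hp) hU hinj fun a ha b hb => (hfiber a ha).trans (hfiber b hb).symm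
  rw [hbd p hp] at hnear
  have hp' : p ∈ closure (ball (0 : E) 1) := by
    rw [closure_ball 0 one_ne_zero]
    exact sphere_subset_closedBall hp
  exact ((mem_closure_iff_frequently.1 hp').and_eventually hnear).exists

theorem subsingleton_fiber_of_mem_ball (hcont : ContinuousOn f (closedBall 0 1))
    (hloc : IsLocalHomeomorphOn f (ball 0 1)) (hbd : ∀ p ∈ sphere (0 : E) 1, f p = p) {p : E}
    {U : Set E} (hp : p ∈ sphere 0 1) (hU : U ∈ 𝓝 p) (hinj : InjOn f (closedBall 0 1 ∩ U))
    {q : E} (hq : q ∈ ball 0 1) : (closedBall 0 1 ∩ f ⁻¹' {q}).Subsingleton := by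
  set P : E → Prop := fun q => (closedBall 0 1 ∩ f ⁻¹' {q}).Subsingleton
  have hsingle : ∀ q ∈ ball (0 : E) 1, P q → ∀ᶠ z in 𝓝 q, P z := by
    intro q hq hPq
    obtain ⟨x, hx, rfl⟩ := ball_subset_image_ball hcont hloc hbd hq
    obtain ⟨V, hV, hinjV⟩ := hloc.exists_mem_nhds_injOn hx
    exact (isCompact_closedBall 0 1).eventually_subsingleton_fiber hcont
      (ball_subset_closedBall hx) hV (hinjV.mono inter_subset_right) hPq
  have hmulti : ∀ q ∈ ball (0 : E) 1, ¬P q → ∀ᶠ z in 𝓝 q, ¬P z := by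
    intro q hq hPq
    obtain ⟨x, ⟨hx, rfl⟩, y, ⟨hy, hxy⟩, hne⟩ := not_subsingleton_iff.1 hPq
    filter_upwards [hloc.eventually_nontrivial_fiber isOpen_ball
      (mem_ball_of_apply_mem_ball hbd hx hq) (mem_ball_of_apply_mem_ball hbd hy (hxy ▸ hq)) hne
      hxy.symm] with z hz
    exact (hz.mono (inter_subset_inter_left _ ball_subset_closedBall)).not_subsingleton
  obtain ⟨q₀, hq₀, hPq₀⟩ := exists_mem_ball_subsingleton_fiber hcont hloc hbd hp hU hinj
  have hball := (convex_ball (0 : E) 1).isPreconnected.subset_left_of_subset_union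
    (u := {q | ∀ᶠ z in 𝓝 q, P z}) (v := {q | ∀ᶠ z in 𝓝 q, ¬P z})
    isOpen_setOfPred_eventually_nhds isOpen_setOfPred_eventually_nhds
    (disjoint_left.2 fun _ hu hv => (hu.and hv).exists.elim fun _ h => h.2 h.1)
    (fun q hq => (em (P q)).imp (hsingle q hq) (hmulti q hq)) ⟨q₀, hq₀, hsingle q₀ hq₀ hPq₀⟩
  exact (hball hq).self_of_nhds

theorem bijOn_closedBall_of_isLocalHomeomorphOn (hcont : ContinuousOn f (closedBall 0 1))
    (hloc : IsLocalHomeomorphOn f (ball 0 1)) (hbd : ∀ p ∈ sphere (0 : E) 1, f p = p) {p : E}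
    {U : Set E} (hp : p ∈ sphere 0 1) (hU : U ∈ 𝓝 p) (hinj : InjOn f (closedBall 0 1 ∩ U)) :
    BijOn f (closedBall 0 1) (closedBall 0 1) := by
  refine ⟨fun x hx => mem_closedBall_zero_iff.2 (norm_apply_le_one hcont hloc hbd hx), ?_, ?_⟩
  · intro x hx y hy hxy
    by_cases hq : f x ∈ ball 0 1
    · exact subsingleton_fiber_of_mem_ball hcont hloc hbd hp hU hinj hq ⟨hx, rfl⟩ ⟨hy, hxy.symm⟩
    have hfix : ∀ z ∈ closedBall (0 : E) 1, f z ∉ ball 0 1 → f z = z := fun z hz h =>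
      hbd z <| closedBall_sdiff_ball (x := 0).subset
        ⟨hz, fun hzB => h (mapsTo_ball hcont hloc hbd hzB)⟩
    rw [← hfix x hx hq, ← hfix y hy (hxy ▸ hq), hxy]
  · intro q hq
    by_cases hqB : q ∈ ball 0 1
    · obtain ⟨x, hx, rfl⟩ := ball_subset_image_ball hcont hloc hbd hqB
      exact ⟨x, ball_subset_closedBall hx, rfl⟩
    · exact ⟨q, hq, hbd q (closedBall_sdiff_ball (x := 0).subset ⟨hq, hqB⟩)⟩

end UnitBall

theorem bijOn_closedBall_of_contDiffOn {E : Type*} [NormedAddCommGroup E] [NormedSpace ℝ E]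
    [FiniteDimensional ℝ E] [Nontrivial E] {f : E → E} (hf : ContDiffOn ℝ 1 f (closedBall 0 1))
    (hf' : ∀ p ∈ closedBall (0 : E) 1, Function.Bijective (fderivWithin ℝ f (closedBall 0 1) p))
    (hbd : ∀ p ∈ sphere (0 : E) 1, f p = p) : BijOn f (closedBall 0 1) (closedBall 0 1) := by
  have hequiv : ∀ x ∈ closedBall (0 : E) 1,
      ∃ e : E ≃L[ℝ] E, fderivWithin ℝ f (closedBall 0 1) x = e := fun x hx =>
    ⟨.ofBijective _ (LinearMap.ker_eq_bot.2 (hf' x hx).1) (LinearMap.range_eq_top.2 (hf' x hx).2),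
      (ContinuousLinearEquiv.coe_ofBijective ..).symm⟩
  have hball : IsLocalHomeomorphOn f (ball 0 1) :=
    (hf.mono ball_subset_closedBall).isLocalHomeomorphOn isOpen_ball fun x hx => by
      rw [← fderivWithin_of_mem_nhds (closedBall_mem_nhds_of_mem hx)]
      exact hequiv x (ball_subset_closedBall hx)
  obtain ⟨p, hp⟩ := NormedSpace.sphere_nonempty (x := (0 : E)).2 zero_le_one
  obtain ⟨e, he⟩ := hequiv p (sphere_subset_closedBall hp)
  have hD : UniqueDiffOn ℝ (closedBall (0 : E) 1) :=
    uniqueDiffOn_convex (convex_closedBall 0 1) (by simp [interior_closedBall])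
  obtain ⟨U, hU, hinj⟩ := (convex_closedBall 0 1).exists_mem_nhds_injOn_inter
    (hf.differentiableOn one_ne_zero)
    (hf.continuousOn_fderivWithin hD le_rfl p (sphere_subset_closedBall hp)) e he
  exact bijOn_closedBall_of_isLocalHomeomorphOn hf.continuousOn hball hbd hp hU hinj

/-- A local `C¹` diffeomorphism `Y : D → ℝ²` of the closed unit disk
(differential invertible at every point) restricting to the identity on `∂D`
is a global diffeomorphism of `D` onto `D`. -/
theorem stmt_3 (Y : EuclideanSpace ℝ (Fin 2) → EuclideanSpace ℝ (Fin 2))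
    (hY : ContDiffOn ℝ 1 Y (closedBall 0 1))
    (hloc : ∀ p ∈ closedBall (0 : EuclideanSpace ℝ (Fin 2)) 1,
      Function.Bijective (fderivWithin ℝ Y (closedBall 0 1) p))
    (hbd : ∀ p ∈ sphere (0 : EuclideanSpace ℝ (Fin 2)) 1, Y p = p) :
    Set.BijOn Y (closedBall 0 1) (closedBall 0 1) :=
  bijOn_closedBall_of_contDiffOn hY hloc hbd
end

section
/- Let u : ℝ² → ℝ be the radial function centered at a point c, defined by u(ρ) = ε for ρ ≤ 1, u(ρ) = −ε·ln(ρ/(1+r))/ln(1+r) for 1 ≤ ρ ≤ 1+r, and u(ρ) = 0 for ρ ≥ 1+r, where ρ is the distance to c and r, ε > 0. Then the area of the graph of u over the annulus 1 ≤ ρ ≤ 1+r satisfies 2π ∫₁^{1+r} √(1 + u'(ρ)²) ρ dρ ≤ π((1+r)² − 1) + 2π ε²/ln(1+r). -/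
open Real intervalIntegral

theorem sqrt_one_add_div_sq_mul_le (k : ℝ) {ρ : ℝ} (hρ : 0 ≤ ρ) :
    √(1 + (k / ρ) ^ 2) * ρ ≤ ρ + k ^ 2 * ρ⁻¹ := by
  have hsqrt : √(1 + (k / ρ) ^ 2) ≤ 1 + (k / ρ) ^ 2 :=
    sqrt_le_self_iff.2 (Or.inr (le_add_of_nonneg_right (sq_nonneg _)))
  calc √(1 + (k / ρ) ^ 2) * ρ ≤ (1 + (k / ρ) ^ 2) * ρ := by gcongr
    _ = ρ + k ^ 2 * ρ⁻¹ := by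
      rcases hρ.eq_or_lt with rfl | hρ
      · simp
      · field_simp

/-- The graph of a radial function with `|u'(ρ)| = |k| / ρ` over the annulus `a ≤ ρ ≤ b`
has area `2π ∫ₐᵇ √(1 + (k/ρ)²) ρ dρ`; the bound comes from `√(1 + t) ≤ 1 + t`. -/
theorem integral_sqrt_one_add_div_sq_mul_le {a b : ℝ} (ha : 0 < a) (hab : a ≤ b) (k : ℝ) :
    ∫ ρ in a..b, √(1 + (k / ρ) ^ 2) * ρ ≤ (b ^ 2 - a ^ 2) / 2 + k ^ 2 * log (b / a) := by
  have hne : ∀ ρ ∈ Set.uIcc a b, ρ ≠ 0 := fun ρ hρ ↦ by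
    rw [Set.uIcc_of_le hab] at hρ
    exact (ha.trans_le hρ.1).ne'
  have hinv : IntervalIntegrable (fun ρ : ℝ ↦ ρ⁻¹) MeasureTheory.volume a b :=
    intervalIntegrable_inv hne continuousOn_id
  have hbound : IntervalIntegrable (fun ρ : ℝ ↦ ρ + k ^ 2 * ρ⁻¹) MeasureTheory.volume a b :=
    intervalIntegrable_id.add (hinv.const_mul _)
  have hgraph : IntervalIntegrable (fun ρ : ℝ ↦ √(1 + (k / ρ) ^ 2) * ρ)
      MeasureTheory.volume a b :=
    ContinuousOn.intervalIntegrable (by fun_prop (disch := exact hne))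
  calc ∫ ρ in a..b, √(1 + (k / ρ) ^ 2) * ρ ≤ ∫ ρ in a..b, (ρ + k ^ 2 * ρ⁻¹) :=
        integral_mono_on hab hgraph hbound fun ρ hρ ↦
          sqrt_one_add_div_sq_mul_le k (ha.le.trans hρ.1)
    _ = (b ^ 2 - a ^ 2) / 2 + k ^ 2 * log (b / a) := by
      rw [integral_add intervalIntegrable_id (hinv.const_mul _),
        integral_const_mul, integral_id, integral_inv_of_pos ha (ha.trans_le hab)]

theorem stmt_9_general (r ε : ℝ) (hr : 0 < r) :
    2 * π * ∫ ρ in (1:ℝ)..(1 + r),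
        Real.sqrt (1 + (ε / (ρ * Real.log (1 + r)))^2) * ρ ≤
      π * ((1 + r)^2 - 1) + 2 * π * ε^2 / Real.log (1 + r) := by
  have hlog : 0 < log (1 + r) := log_pos (by linarith)
  have hgraph := integral_sqrt_one_add_div_sq_mul_le one_pos (by linarith : (1 : ℝ) ≤ 1 + r)
    (ε / log (1 + r))
  simp only [div_div, mul_comm (log (1 + r)), one_pow, div_one] at hgraph
  calc 2 * π * ∫ ρ in (1:ℝ)..(1 + r), √(1 + (ε / (ρ * log (1 + r))) ^ 2) * ρ
      ≤ 2 * π * (((1 + r) ^ 2 - 1) / 2 + (ε / log (1 + r)) ^ 2 * log (1 + r)) := by gcongr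
    _ = π * ((1 + r) ^ 2 - 1) + 2 * π * ε ^ 2 / log (1 + r) := by field_simp

/-- For the radial logarithmic cutoff function `u` with
`u'(ρ) = −ε/(ρ ln(1+r))` on the annulus `1 ≤ ρ ≤ 1+r`, the area of its graph over the
annulus satisfies `2π ∫₁^{1+r} √(1 + u'(ρ)²) ρ dρ ≤ π((1+r)² − 1) + 2π ε²/ln(1+r)`. -/
theorem stmt_9 (r ε : ℝ) (hr : 0 < r) (hε : 0 < ε) :
    2 * π * ∫ ρ in (1:ℝ)..(1 + r),
        Real.sqrt (1 + (ε / (ρ * Real.log (1 + r)))^2) * ρ ≤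
      π * ((1 + r)^2 - 1) + 2 * π * ε^2 / Real.log (1 + r) :=
  stmt_9_general r ε hr
end
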